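/- Let p : Y → X be a Kan fibration of simplicial sets. Then the image of p is complemented: the collection of sets X_n \ p(Y_n), for n ∈ ℕ, forms a simplicial subset of X. In other words, X decomposes as the disjoint union of the simplicial subset p(Y) and its levelwise complement. -/

import Mathlib

universe u

open CategoryTheory Simplicial MonoidalCategory CategoryTheory.Limits
  CategoryTheory.GrothendieckTopology

/-- A Kan fibration: a map of simplicial sets with the right lifting property
against all horn inclusions `Λ[n, i] ⟶ Δ[n]` for `n ≥ 1`. -/
def KanFibration {Y X : SSet.{u}} (p : Y ⟶ X) : Prop :=
  ∀ (n : ℕ) (i : Fin (n + 2)), HasLiftingProperty (SSet.horn (n + 1) i).ι p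

namespace KanComplemented

open SSet SimplexCategory Opposite

variable {Y X : SSet.{u}}

/-- Compatibility of a family of would-be faces of an `n+1`-simplex. -/
def Compat : ∀ {n : ℕ}, (i : Fin (n + 2)) → (∀ j : Fin (n + 2), j ≠ i → Y.obj (op ⦋n⦌)) → Prop := fun {n} => match n with
  | 0 => fun _ _ => True
  | m + 1 => fun i F => ∀ (a b : Fin (m + 2)), a ≤ b → ∀ (ha : a.castSucc ≠ i) (hb : b.succ ≠ i),
      Y.map (δ a).op (F b.succ hb) = Y.map (δ b).op (F a.castSucc ha)

lemma exMissing {n : ℕ} {i : Fin (n + 2)} {m : SimplexCategoryᵒᵖ} (α : Λ[n+1, i].obj m) :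
    ∃ j, j ≠ i ∧ ∀ k, (stdSimplex.objEquiv α.1).toOrderHom k ≠ j := by
  have h := α.2
  simp [SSet.horn, ← Set.univ_subset_iff, Set.subset_def, stdSimplex.asOrderHom, not_or] at h
  exact h

lemma indep_le {n : ℕ} {i : Fin (n + 2)} {F : ∀ j : Fin (n + 2), j ≠ i → Y.obj (op ⦋n⦌)}
    (hF : Compat i F) {m : SimplexCategoryᵒᵖ} (f' : m.unop ⟶ ⦋n+1⦌)
    {j₁ j₂ : Fin (n + 2)} (h1i : j₁ ≠ i) (h2i : j₂ ≠ i)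
    (h1 : ∀ k, f'.toOrderHom k ≠ j₁) (h2 : ∀ k, f'.toOrderHom k ≠ j₂) (hle : j₁ ≤ j₂) :
    Y.map (factor_δ (m := m.unop.len) f' j₁).op (F j₁ h1i) =
      Y.map (factor_δ (m := m.unop.len) f' j₂).op (F j₂ h2i) := by
  rcases eq_or_lt_of_le hle with rfl | hlt
  · rfl
  · cases n with
    | zero =>
      exfalso
      have e1 : ((f'.toOrderHom 0 : Fin 2)).val ≠ j₁.val := fun h => h1 0 (Fin.ext h)
      have e2 : ((f'.toOrderHom 0 : Fin 2)).val ≠ j₂.val := fun h => h2 0 (Fin.ext h)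
      have b0 := (f'.toOrderHom 0).isLt
      have b1 := j₁.isLt
      have b2 := j₂.isLt
      have hv : j₁.val < j₂.val := hlt
      omega
    | succ m' =>
      obtain ⟨a, rfl⟩ : ∃ a, Fin.castSucc a = j₁ :=
        ⟨j₁.castPred (Fin.ne_last_of_lt hlt), Fin.castSucc_castPred _ _⟩
      obtain ⟨b, rfl⟩ : ∃ b, Fin.succ b = j₂ := by
        refine ⟨j₂.pred ?_, Fin.succ_pred _ _⟩
        rintro rfl
        exact Fin.not_lt_zero _ hlt
      have hab : a ≤ b := Fin.castSucc_lt_succ_iff.mp hlt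
      have hg : factor_δ (m := m.unop.len) f' b.succ ≫ δ b.succ = f' :=
        factor_δ_spec (m := m.unop.len) f' b.succ h2
      have hmiss : ∀ k, (factor_δ (m := m.unop.len) f' b.succ).toOrderHom k ≠ a := by
        intro k hk
        apply h1 k
        have h3 : f'.toOrderHom k =
            (δ b.succ).toOrderHom ((factor_δ (m := m.unop.len) f' b.succ).toOrderHom k) := by
          conv_lhs => rw [← hg]
          rfl
        rw [h3, hk]
        exact Fin.succAbove_of_castSucc_lt _ _ hlt
      have hh : factor_δ (m := m.unop.len) (factor_δ (m := m.unop.len) f' b.succ) a ≫ δ a =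
          factor_δ (m := m.unop.len) f' b.succ :=
        factor_δ_spec (m := m.unop.len) _ a hmiss
      have key : factor_δ (m := m.unop.len) f' a.castSucc =
          factor_δ (m := m.unop.len) (factor_δ (m := m.unop.len) f' b.succ) a ≫ δ b := by
        rw [← cancel_mono (δ a.castSucc), factor_δ_spec (m := m.unop.len) f' a.castSucc h1,
          Category.assoc, ← δ_comp_δ hab, ← Category.assoc, hh, hg]
      rw [key]
      conv_rhs => rw [show factor_δ (m := m.unop.len) f' b.succ =
        factor_δ (m := m.unop.len) (factor_δ (m := m.unop.len) f' b.succ) a ≫ δ a from hh.symm]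
      rw [op_comp, op_comp, FunctorToTypes.map_comp_apply, FunctorToTypes.map_comp_apply]
      exact congrArg (Y.map _) (hF a b hab h1i h2i).symm

lemma indep {n : ℕ} {i : Fin (n + 2)} {F : ∀ j : Fin (n + 2), j ≠ i → Y.obj (op ⦋n⦌)}
    (hF : Compat i F) {m : SimplexCategoryᵒᵖ} (f' : m.unop ⟶ ⦋n+1⦌)
    {j₁ j₂ : Fin (n + 2)} (h1i : j₁ ≠ i) (h2i : j₂ ≠ i)
    (h1 : ∀ k, f'.toOrderHom k ≠ j₁) (h2 : ∀ k, f'.toOrderHom k ≠ j₂) :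
    Y.map (factor_δ (m := m.unop.len) f' j₁).op (F j₁ h1i) =
      Y.map (factor_δ (m := m.unop.len) f' j₂).op (F j₂ h2i) := by
  rcases le_total j₁ j₂ with h | h
  · exact indep_le hF f' h1i h2i h1 h2 h
  · exact (indep_le hF f' h2i h1i h2 h1 h).symm

/-- The morphism `Λ[n+1, i] ⟶ Y` determined by a compatible family of faces. -/
noncomputable def hornMap {n : ℕ} {i : Fin (n + 2)}
    (F : ∀ j : Fin (n + 2), j ≠ i → Y.obj (op ⦋n⦌)) (hF : Compat i F) :
    (Λ[n+1, i] : SSet.{u}) ⟶ Y where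
  app m := TypeCat.ofHom fun α =>
    Y.map (factor_δ (m := m.unop.len) (stdSimplex.objEquiv α.1)
      (exMissing α).choose).op (F _ (exMissing α).choose_spec.1)
  naturality := by
    intro m₁ m₂ g
    refine ConcreteCategory.hom_ext _ _ fun α => ?_
    dsimp only [types_comp_apply, TypeCat.ofHom_apply]
    obtain ⟨hji, hjm⟩ := (exMissing α).choose_spec
    obtain ⟨hji', hjm'⟩ := (exMissing ((Λ[n+1, i] : SSet.{u}).map g α)).choose_spec
    have hjm2 : ∀ k, (stdSimplex.objEquiv (((Λ[n+1, i] : SSet.{u}).map g α).1)).toOrderHom k ≠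
        (exMissing α).choose := fun k => hjm _
    have step1 := indep (m := m₂) hF (stdSimplex.objEquiv (((Λ[n+1, i] : SSet.{u}).map g α).1))
      hji' hji hjm' hjm2
    rw [step1]
    have step2 : factor_δ (m := m₂.unop.len)
        (stdSimplex.objEquiv (((Λ[n+1, i] : SSet.{u}).map g α).1)) (exMissing α).choose =
        g.unop ≫ factor_δ (m := m₁.unop.len) (stdSimplex.objEquiv α.1)
          (exMissing α).choose := by
      rw [← cancel_mono (δ (exMissing α).choose),
        factor_δ_spec (m := m₂.unop.len) _ _ hjm2, Category.assoc,
        factor_δ_spec (m := m₁.unop.len) _ _ hjm]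
      rfl
    rw [step2, op_comp]
    exact FunctorToTypes.map_comp_apply Y _ g _

lemma hornMap_apply {n : ℕ} {i : Fin (n + 2)}
    {F : ∀ j : Fin (n + 2), j ≠ i → Y.obj (op ⦋n⦌)} (hF : Compat i F)
    {m : SimplexCategoryᵒᵖ} (α : Λ[n+1, i].obj m) {j : Fin (n + 2)} (hj : j ≠ i)
    (hmiss : ∀ k, (stdSimplex.objEquiv α.1).toOrderHom k ≠ j) :
    (hornMap F hF).app m α =
      Y.map (factor_δ (m := m.unop.len) (stdSimplex.objEquiv α.1) j).op (F j hj) :=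
  indep hF _ (exMissing α).choose_spec.1 hj (exMissing α).choose_spec.2 hmiss

lemma hornMap_face {n : ℕ} {i : Fin (n + 2)}
    {F : ∀ j : Fin (n + 2), j ≠ i → Y.obj (op ⦋n⦌)} (hF : Compat i F)
    (j : Fin (n + 2)) (hj : j ≠ i) :
    (hornMap F hF).app (op ⦋n⦌) (horn.face i j hj) = F j hj := by
  have hmiss : ∀ k, (stdSimplex.objEquiv (horn.face i j hj).1).toOrderHom k ≠ j :=
    fun k => Fin.succAbove_ne j k
  rw [hornMap_apply hF _ hj hmiss]
  have hid : factor_δ (m := n) (stdSimplex.objEquiv (n := ⦋n+1⦌) (m := op ⦋n⦌) (horn.face i j hj).1) j =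
      𝟙 (⦋n⦌ : SimplexCategory) := by
    rw [← cancel_mono (δ j), factor_δ_spec (m := n) _ j hmiss, Category.id_comp]
    rfl
  rw [hid]
  simp

lemma yonedaEquiv_symm_app {n : ℕ} (x : X.obj (op ⦋n⦌))
    {m : SimplexCategoryᵒᵖ} (β : Δ[n].obj m) :
    ((SSet.yonedaEquiv (X := X) (n := ⦋n⦌)).symm x).app m β = X.map (stdSimplex.objEquiv β).op x := by
  rfl

lemma yonedaEquiv_comp {n : ℕ} (L : Δ[n] ⟶ Y) (p : Y ⟶ X) :
    SSet.yonedaEquiv (X := X) (n := ⦋n⦌) (L ≫ p) = p.app _ (SSet.yonedaEquiv (X := Y) (n := ⦋n⦌) L) := by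
  rfl

lemma yonedaEquiv_map_δ {n : ℕ} (L : Δ[n+1] ⟶ Y) (j : Fin (n + 2)) :
    Y.map (δ j).op (SSet.yonedaEquiv (X := Y) (n := ⦋n+1⦌) L) =
      L.app (op ⦋n⦌) ((stdSimplex.objEquiv).symm (δ j)) := by
  have h := types_congr_hom (L.naturality (δ j).op) (stdSimplex.objEquiv.symm (𝟙 ⦋n+1⦌))
  dsimp at h
  have e : SSet.yonedaEquiv (X := Y) (n := ⦋n+1⦌) L = L.app (op ⦋n+1⦌) (stdSimplex.objEquiv.symm (𝟙 ⦋n+1⦌)) := by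
    rfl
  rw [e, ← h]
  congr 1

/-- The key filling lemma: a Kan fibration fills any compatible horn over a simplex. -/
theorem fill {p : Y ⟶ X} (hp : KanFibration p) {n : ℕ} (i : Fin (n + 2))
    (x : X.obj (op ⦋n+1⦌))
    (F : ∀ j : Fin (n + 2), j ≠ i → Y.obj (op ⦋n⦌)) (hF : Compat i F)
    (hpF : ∀ j hj, p.app _ (F j hj) = X.map (δ j).op x) :
    ∃ z : Y.obj (op ⦋n+1⦌), p.app _ z = x ∧ ∀ j hj, Y.map (δ j).op z = F j hj := by
  haveI := hp n i
  have comm : hornMap F hF ≫ p = (horn (n+1) i).ι ≫ (SSet.yonedaEquiv (X := X) (n := ⦋n+1⦌)).symm x := by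
    apply horn.hom_ext
    intro j hj
    have h1 : (hornMap F hF ≫ p).app (op ⦋n⦌) (horn.face i j hj) = p.app _ (F j hj) := by
      show p.app (op ⦋n⦌) ((hornMap F hF).app (op ⦋n⦌) (horn.face i j hj)) = _
      rw [hornMap_face hF j hj]
    have h2 : ((horn (n+1) i).ι ≫ (SSet.yonedaEquiv (X := X) (n := ⦋n+1⦌)).symm x).app (op ⦋n⦌)
        (horn.face i j hj) = X.map (δ j).op x := by
      show ((SSet.yonedaEquiv (X := X) (n := ⦋n+1⦌)).symm x).app (op ⦋n⦌) (horn.face i j hj).1 = _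
      rw [yonedaEquiv_symm_app]
      congr 1
    rw [h1, h2, hpF j hj]
  have sq : CommSq (hornMap F hF) ((horn (n+1) i).ι) p ((SSet.yonedaEquiv (X := X) (n := ⦋n+1⦌)).symm x) :=
    ⟨comm⟩
  refine ⟨SSet.yonedaEquiv (X := Y) (n := ⦋n+1⦌) sq.lift, ?_, ?_⟩
  · rw [← yonedaEquiv_comp, sq.fac_right]
    simp
  · intro j hj
    rw [yonedaEquiv_map_δ]
    have h3 := types_congr_hom (congrArg (fun (f : (Λ[n+1, i] : SSet.{u}) ⟶ Y) => f.app (op ⦋n⦌))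
      sq.fac_left) (horn.face i j hj)
    dsimp only [NatTrans.comp_app, types_comp_apply] at h3
    rw [hornMap_face hF j hj] at h3
    rw [← h3]
    rfl

lemma succAbove_val {n : ℕ} (p : Fin (n+1)) (t : Fin n) :
    (p.succAbove t).val = if t.val < p.val then t.val else t.val + 1 := by
  rcases lt_or_ge (t.val) (p.val) with h | h
  · rw [Fin.succAbove_of_castSucc_lt _ _ (by simpa [Fin.lt_def] using h), if_pos h]
    rfl
  · rw [Fin.succAbove_of_le_castSucc _ _ (by simpa [Fin.le_def] using h), if_neg (by omega)]
    rfl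

/-- The cone map `⦋s⦌ ⟶ ⦋a⦌` on a tuple `β`, sending the last vertex to the last
vertex of `⦋a⦌` and vertex `t < s` to `β t`. -/
def coneMap {a s : ℕ} (β : Fin s →o Fin (a+1)) : (⦋s⦌ : SimplexCategory) ⟶ ⦋a⦌ :=
  SimplexCategory.mkHom
    ⟨fun t => if h : t.val < s then β ⟨t.val, h⟩ else Fin.last a, by
      intro t t' htt'
      dsimp only
      split_ifs with h h'
      · exact β.monotone (by exact_mod_cast htt')
      · exact Fin.le_last _
      · exfalso
        have hle : t.val ≤ t'.val := htt'
        omega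
      · exact le_refl _⟩

lemma coneMap_apply {a s : ℕ} (β : Fin s →o Fin (a+1)) (t : Fin (s+1)) :
    (coneMap β).toOrderHom t = if h : t.val < s then β ⟨t.val, h⟩ else Fin.last a :=
  rfl

lemma succAbove_succAbove {s : ℕ} {u v : Fin (s+1)} (huv : u ≤ v) (t : Fin s) :
    (v.succ).succAbove (u.succAbove t) = (u.castSucc).succAbove (v.succAbove t) := by
  have hv := huv
  rw [Fin.le_def] at hv
  apply Fin.ext
  rw [succAbove_val, succAbove_val, succAbove_val, succAbove_val]
  simp only [Fin.val_succ, Fin.coe_castSucc]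
  split_ifs <;> omega

lemma coneMap_δ_last {a s : ℕ} (β : Fin (s+1) →o Fin (a+1)) :
    δ (Fin.last (s+1)) ≫ coneMap β = SimplexCategory.mkHom β := by
  apply SimplexCategory.Hom.ext
  apply OrderHom.ext
  funext t
  rw [SimplexCategory.comp_toOrderHom]
  show (coneMap β).toOrderHom ((Fin.last (s+1)).succAbove t) = β t
  rw [Fin.succAbove_last, coneMap_apply, dif_pos (show (t.castSucc).val < s+1 from t.isLt)]
  exact congrArg β (Fin.ext rfl)

lemma coneMap_δ_castSucc {a s : ℕ} (β : Fin (s+1) →o Fin (a+1)) (c : Fin (s+1)) :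
    δ c.castSucc ≫ coneMap β = coneMap (β.comp (Fin.succAboveOrderEmb c).toOrderHom) := by
  apply SimplexCategory.Hom.ext
  apply OrderHom.ext
  funext t
  rw [SimplexCategory.comp_toOrderHom]
  show (coneMap β).toOrderHom ((c.castSucc).succAbove t) = _
  rw [coneMap_apply, coneMap_apply]
  by_cases ht : t.val < s
  · rw [dif_pos ht]
    have hval : ((c.castSucc).succAbove t).val < s + 1 := by
      rw [succAbove_val]
      split_ifs <;> omega
    rw [dif_pos hval]
    show β _ = β ((Fin.succAboveOrderEmb c).toOrderHom ⟨t.val, ht⟩)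
    congr 1
    apply Fin.ext
    show ((c.castSucc).succAbove t).val = (c.succAbove ⟨t.val, ht⟩).val
    rw [succAbove_val, succAbove_val]
    simp only [Fin.coe_castSucc]
    try split_ifs
    all_goals omega
  · have hts : ¬ t.val < s := ht
    have hval : ¬ ((c.castSucc).succAbove t).val < s + 1 := by
      rw [succAbove_val]
      have hcs := c.isLt
      simp only [Fin.coe_castSucc, SimplexCategory.len_mk] at *
      split_ifs <;> omega
    rw [dif_neg hval, dif_neg ht]

/-- The empty order hom into `Fin (a+1)`. -/
def botβ (a : ℕ) : Fin 0 →o Fin (a+1) :=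
  ⟨Fin.elim0, by intro t; exact t.elim0⟩

lemma eq_botβ {a : ℕ} (β : Fin 0 →o Fin (a+1)) : β = botβ a := by
  ext t
  exact t.elim0

lemma tower {p : Y ⟶ X} (hp : KanFibration p) {a : ℕ} (x : X.obj (op ⦋a⦌))
    (w1 : Y.obj (op ⦋0⦌)) (hw : p.app _ w1 = X.map (coneMap (botβ a)).op x) (s : ℕ) :
    ∃ (g1 : (Fin s →o Fin (a+1)) → Y.obj (op ⦋s⦌))
      (g2 : (Fin (s+1) →o Fin (a+1)) → Y.obj (op ⦋s+1⦌)),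
      (∀ β, p.app _ (g1 β) = X.map (coneMap β).op x) ∧
      (∀ β, p.app _ (g2 β) = X.map (coneMap β).op x) ∧
      (∀ β (c : Fin (s+1)), Y.map (δ c.castSucc).op (g2 β) =
        g1 (β.comp (Fin.succAboveOrderEmb c).toOrderHom)) := by
  induction s with
  | zero =>
    have H : ∀ β : Fin 1 →o Fin (a+1), ∃ z : Y.obj (op ⦋1⦌),
        p.app _ z = X.map (coneMap β).op x ∧
        ∀ j (hj : j ≠ Fin.last 1), Y.map (δ j).op z = w1 := by
      intro β
      refine fill hp (Fin.last 1) (X.map (coneMap β).op x) (fun _ _ => w1) trivial ?_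
      intro j hj
      have hj0 : j = (0 : Fin 1).castSucc := by
        have h1 := j.isLt
        have h2 : j.val ≠ 1 := fun h => hj (Fin.ext h)
        exact Fin.ext (by simpa using by omega)
      rw [hw, hj0, ← FunctorToTypes.map_comp_apply, ← op_comp, coneMap_δ_castSucc]
      congr 2
    choose g2 hg2p hg2f using H
    refine ⟨fun _ => w1, g2, ?_, hg2p, ?_⟩
    · intro β
      rw [hw]
      congr 2
    · intro β c
      have hc : c = 0 := Fin.ext (by have := c.isLt; omega)
      have hne : c.castSucc ≠ Fin.last 1 := by
        rw [hc]
        decide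
      rw [hg2f β c.castSucc hne]
  | succ s ih =>
    obtain ⟨g1, g2, A1, A2, C⟩ := ih
    have H : ∀ β : Fin (s+2) →o Fin (a+1), ∃ z : Y.obj (op ⦋s+2⦌),
        p.app _ z = X.map (coneMap β).op x ∧
        ∀ j (hj : j ≠ Fin.last (s+2)), Y.map (δ j).op z =
          g2 (β.comp (Fin.succAboveOrderEmb (j.castPred hj)).toOrderHom) := by
      intro β
      refine fill hp (Fin.last (s+2)) (X.map (coneMap β).op x)
        (fun j hj => g2 (β.comp (Fin.succAboveOrderEmb (j.castPred hj)).toOrderHom)) ?_ ?_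
      · -- Compat
        intro u v huv hu hv
        have hvne : v ≠ Fin.last (s+1) := by
          intro h
          apply hv
          rw [h]
          rfl
        have hune : u ≠ Fin.last (s+1) := by
          intro h
          apply hvne
          exact le_antisymm (Fin.le_last _) (h ▸ huv)
        obtain ⟨v', rfl⟩ : ∃ v', Fin.castSucc v' = v := ⟨v.castPred hvne, Fin.castSucc_castPred _ _⟩
        obtain ⟨u', rfl⟩ : ∃ u', Fin.castSucc u' = u := ⟨u.castPred hune, Fin.castSucc_castPred _ _⟩
        have hu'v' : u' ≤ v' := by
          rwa [Fin.castSucc_le_castSucc_iff] at huv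
        have e1 : (Fin.castSucc v').succ.castPred hv = v'.succ := by
          apply Fin.castSucc_injective
          rw [Fin.castSucc_castPred]
          apply Fin.ext
          simp
        have e2 : ((Fin.castSucc u').castSucc).castPred hu = u'.castSucc := by
          apply Fin.castSucc_injective
          rw [Fin.castSucc_castPred]
        dsimp only
        rw [e1, e2, C, C]
        congr 1
        ext t
        exact congrArg Fin.val (congrArg β (succAbove_succAbove hu'v' t))
      · -- hpF
        intro j hj
        rw [A2, ← FunctorToTypes.map_comp_apply, ← op_comp]
        congr 2
        rw [← coneMap_δ_castSucc β (j.castPred hj), Fin.castSucc_castPred]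
    choose g3 hg3p hg3f using H
    refine ⟨g2, g3, A2, hg3p, ?_⟩
    intro β c
    have hne : c.castSucc ≠ Fin.last (s+2) := Fin.ne_last_of_lt (Fin.castSucc_lt_last c)
    rw [hg3f β c.castSucc hne]
    congr 2

lemma lift_of_last {p : Y ⟶ X} (hp : KanFibration p) {a : ℕ} (x : X.obj (op ⦋a⦌))
    (w1 : Y.obj (op ⦋0⦌)) (hw : p.app _ w1 = X.map (coneMap (botβ a)).op x) :
    ∃ z, p.app (op ⦋a⦌) z = x := by
  obtain ⟨g1, g2, A1, A2, C⟩ := tower hp x w1 hw a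
  refine ⟨Y.map (δ (Fin.last (a+1))).op (g2 OrderHom.id), ?_⟩
  rw [FunctorToTypes.naturality, A2, ← FunctorToTypes.map_comp_apply, ← op_comp,
    coneMap_δ_last]
  have : SimplexCategory.mkHom (OrderHom.id : Fin (a+1) →o Fin (a+1)) =
      𝟙 (⦋a⦌ : SimplexCategory) := rfl
  rw [this]
  simp

lemma key {p : Y ⟶ X} (hp : KanFibration p) {a b : ℕ} (g : (⦋b⦌ : SimplexCategory) ⟶ ⦋a⦌)
    (x : X.obj (op ⦋a⦌)) (y : Y.obj (op ⦋b⦌)) (hy : p.app _ y = X.map g.op x) :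
    ∃ z, p.app (op ⦋a⦌) z = x := by
  set k := g.toOrderHom (Fin.last b) with hk
  set w0 := Y.map (SimplexCategory.const ⦋0⦌ ⦋b⦌ (Fin.last b)).op y with hw0def
  have hw0 : p.app _ w0 = X.map (SimplexCategory.const ⦋0⦌ ⦋a⦌ k).op x := by
    rw [hw0def, FunctorToTypes.naturality, hy, ← FunctorToTypes.map_comp_apply, ← op_comp,
      SimplexCategory.const_comp]
  have Hedge := fill hp (0 : Fin 2)
    (X.map (coneMap (OrderHom.const (Fin 1) k)).op x) (fun _ _ => w0) trivial ?_
  · obtain ⟨z1, hz1p, -⟩ := Hedge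
    have hw1 : p.app _ (Y.map (δ (0 : Fin 2)).op z1) = X.map (coneMap (botβ a)).op x := by
      rw [FunctorToTypes.naturality, hz1p, ← FunctorToTypes.map_comp_apply, ← op_comp]
      have h0 : (δ (0 : Fin 2)) = δ ((0 : Fin 1).castSucc) := by
        congr 1
      rw [h0, coneMap_δ_castSucc]
      congr 2
    exact lift_of_last hp x _ hw1
  · intro j hj
    have hj1 : j = Fin.last 1 := by
      have h1 := j.isLt
      have h2 : j.val ≠ 0 := fun h => hj (Fin.ext h)
      exact Fin.ext (by simpa using by omega)
    rw [hw0, hj1, ← FunctorToTypes.map_comp_apply, ← op_comp, coneMap_δ_last]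
    congr 1

end KanComplemented

/-- If `p : Y ⟶ X` is a Kan fibration, then the levelwise complements of the image
of `p` form a simplicial subset of `X`: the image of `p` is complemented, so `X`
decomposes as the disjoint union of the image and its levelwise complement. -/
theorem image_of_kan_fibration_is_complemented {Y X : SSet.{u}} (p : Y ⟶ X)
    (hp : KanFibration p) :
    ∃ S : Subfunctor X, ∀ n : SimplexCategoryᵒᵖ, S.obj n = ((Subfunctor.range p).obj n)ᶜ := by
  refine ⟨⟨fun n => ((Subfunctor.range p).obj n)ᶜ, ?_⟩, fun n => rfl⟩
  intro U V i x hx hmem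
  refine hx ?_
  obtain ⟨y, hy⟩ := hmem
  exact KanComplemented.key hp (a := U.unop.len) (b := V.unop.len) i.unop x y hy
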